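/- Suppose G satisfies a β-quasihyperbolic boundary condition with β ∈ (0,1], and suppose that for each Whitney cube Q there is a chain C(Q) from a fixed cube Q₀ with length ℓ(C(Q)) satisfying ℓ(C(Q)) ≤ c_n k_G(x₀, x) + 1 for every x ∈ Q, and that ∑_{Q ∈ W} (k_G(x₀, x_Q) + 1)^s |Q| < ∞ for every s > 0. Then for every ε ∈ (0,1) and 1 ≤ q < ∞ there exists c > 0 such that for all A ∈ W: ∑_{Q ∈ W, Q ⊂ S(A)} ℓ(C(Q))^{q-1} |Q| ≤ c |S(A)|^{1-ε}, where S(A) is the shadow of A. -/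

import Mathlib

open MeasureTheory ENNReal

/-- The quasihyperbolic distance `k_G(x, y) = inf_γ ∫_γ ds / dist(z, ∂G)`, the infimum
being over rectifiable curves in `G` from `x` to `y`, parametrized by arc length
(encoded as `1`-Lipschitz parametrizations). -/
noncomputable def qhDist {n : ℕ} (G : Set (EuclideanSpace ℝ (Fin n)))
    (x y : EuclideanSpace ℝ (Fin n)) : ℝ :=
  sInf {v : ℝ | ∃ (L : ℝ) (γ : ℝ → EuclideanSpace ℝ (Fin n)), 0 ≤ L ∧
    LipschitzWith 1 γ ∧ γ 0 = x ∧ γ L = y ∧ (∀ t ∈ Set.Icc (0:ℝ) L, γ t ∈ G) ∧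
    v = ∫ t in (0:ℝ)..L, 1 / Metric.infDist (γ t) (frontier G)}

/-- `G` satisfies a `β`-quasihyperbolic boundary condition with base point `x₀` and
constant `c`: `k_G(x, x₀) ≤ (1/β) log(1/dist(x, ∂G)) + c` for all `x ∈ G`. -/
def QHBCWith {n : ℕ} (G : Set (EuclideanSpace ℝ (Fin n))) (β : ℝ)
    (x₀ : EuclideanSpace ℝ (Fin n)) (c : ℝ) : Prop :=
  ∀ x ∈ G, qhDist G x x₀ ≤ (1 / β) * Real.log (1 / Metric.infDist x (frontier G)) + c

/-- `G` satisfies a `β`-quasihyperbolic boundary condition. -/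
def QHBC {n : ℕ} (G : Set (EuclideanSpace ℝ (Fin n))) (β : ℝ) : Prop :=
  ∃ x₀ ∈ G, ∃ c : ℝ, QHBCWith G β x₀ c

/-- `G` supports the `(q,p)`-Poincaré inequality
`(∫_G |u - u_G|^q)^{1/q} ≤ c (∫_G |∇u|^p)^{1/p}` for Sobolev functions on `G`. -/
def SupportsPoincare {n : ℕ} (G : Set (EuclideanSpace ℝ (Fin n))) (q p : ℝ) : Prop :=
  ∃ c : ℝ, ∀ u : EuclideanSpace ℝ (Fin n) → ℝ,
    DifferentiableOn ℝ u G → IntegrableOn u G volume →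
    IntegrableOn (fun x => ‖fderivWithin ℝ u G x‖ ^ p) G volume →
    (∫ x in G, |u x - (∫ y in G, u y) / (volume G).toReal| ^ q) ^ (1 / q)
      ≤ c * (∫ x in G, ‖fderivWithin ℝ u G x‖ ^ p) ^ (1 / p)

open MeasureTheory ENNReal

/-- The closed axis-parallel cube with center `c` and side length `l`. -/
def closedCube {n : ℕ} (c : EuclideanSpace ℝ (Fin n)) (l : ℝ) :
    Set (EuclideanSpace ℝ (Fin n)) :=
  {y | ∀ i, |y i - c i| ≤ l / 2}

/-- The distance between two sets. -/
noncomputable def setDist {n : ℕ} (A B : Set (EuclideanSpace ℝ (Fin n))) : ℝ :=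
  sInf {d : ℝ | ∃ a ∈ A, ∃ b ∈ B, d = dist a b}

/-- A Whitney decomposition of `G`: a countable family of closed dyadic cubes with
pairwise disjoint interiors whose union is `G`, each cube `Q` satisfying
`diam(Q) ≤ dist(Q, ∂G) ≤ 4 diam(Q)`. The `i`-th cube has center `c i` and side
length `s i`. -/
structure WhitneyDecomp (n : ℕ) (G : Set (EuclideanSpace ℝ (Fin n))) where
  c : ℕ → EuclideanSpace ℝ (Fin n)
  s : ℕ → ℝ
  dyadic : ∀ i, ∃ (j : ℤ) (k : Fin n → ℤ), s i = (2:ℝ) ^ (-j) ∧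
    ∀ m, c i m = ((k m : ℝ) + 1 / 2) * (2:ℝ) ^ (-j)
  disjoint_interiors : Pairwise fun i j =>
    interior (closedCube (c i) (s i)) ∩ interior (closedCube (c j) (s j)) = ∅
  cover : G = ⋃ i, closedCube (c i) (s i)
  diam_le_dist : ∀ i, Metric.diam (closedCube (c i) (s i))
    ≤ setDist (closedCube (c i) (s i)) (frontier G)
  dist_le_diam : ∀ i, setDist (closedCube (c i) (s i)) (frontier G)
    ≤ 4 * Metric.diam (closedCube (c i) (s i))

/-- The `i`-th cube of a Whitney decomposition. -/
def WhitneyDecomp.cube {n : ℕ} {G : Set (EuclideanSpace ℝ (Fin n))}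
    (W : WhitneyDecomp n G) (i : ℕ) : Set (EuclideanSpace ℝ (Fin n)) :=
  closedCube (W.c i) (W.s i)

lemma qhDist_nonneg' {n : ℕ} (G : Set (EuclideanSpace ℝ (Fin n)))
    (x y : EuclideanSpace ℝ (Fin n)) : 0 ≤ qhDist G x y := by
  apply Real.sInf_nonneg
  rintro v ⟨L, γ, hL, _, _, _, _, rfl⟩
  apply intervalIntegral.integral_nonneg hL
  intro t _
  exact one_div_nonneg.mpr Metric.infDist_nonneg

lemma convex_closedCube' {n : ℕ} (c : EuclideanSpace ℝ (Fin n)) (l : ℝ) :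
    Convex ℝ (closedCube c l) := by
  intro y hy z hz a b ha hb hab i
  have h : (a • y + b • z) i - c i = a * (y i - c i) + b * (z i - c i) := by
    simp only [PiLp.add_apply, PiLp.smul_apply, smul_eq_mul]
    linear_combination (c i) * hab
  rw [h]
  calc |a * (y i - c i) + b * (z i - c i)| ≤ a * |y i - c i| + b * |z i - c i| := by
        refine (abs_add_le _ _).trans ?_
        rw [abs_mul, abs_mul, abs_of_nonneg ha, abs_of_nonneg hb]
    _ ≤ a * (l/2) + b * (l/2) := by
        have h1 := hy i
        have h2 := hz i
        have := abs_nonneg (y i - c i)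
        nlinarith
    _ = l/2 := by rw [← add_mul, hab, one_mul]

/-- Suppose `G` satisfies a `β`-quasihyperbolic boundary condition, each
Whitney cube `Q` carries a chain of length `ℓC Q` with `ℓC Q ≤ c_n k_G(x₀, x) + 1` for
all `x ∈ Q`, and `∑_Q (k_G(x₀, x_Q) + 1)^s |Q| < ∞` for every `s > 0`. Then for every
`ε ∈ (0,1)` and `q ≥ 1` there is `c > 0` with
`∑_{Q ⊆ S(A)} ℓC(Q)^{q-1} |Q| ≤ c |S(A)|^{1-ε}` for every Whitney cube `A`. -/
theorem stmt_17 (n : ℕ) (hn : 2 ≤ n) (G : Set (EuclideanSpace ℝ (Fin n)))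
    (hGo : IsOpen G) (hGc : IsConnected G) (hGb : Bornology.IsBounded G)
    (β : ℝ) (hβ : β ∈ Set.Ioc (0:ℝ) 1)
    (x₀ : EuclideanSpace ℝ (Fin n)) (hx₀ : x₀ ∈ G) (c₀ : ℝ)
    (hqhbc : QHBCWith G β x₀ c₀)
    (W : WhitneyDecomp n G) (ℓC : ℕ → ℕ) (S : ℕ → Set (EuclideanSpace ℝ (Fin n)))
    (hS : ∀ A, S A ⊆ G)
    (cn : ℝ) (hcn : 0 < cn)
    (hchain : ∀ Q : ℕ, ∀ x ∈ W.cube Q, (ℓC Q : ℝ) ≤ cn * qhDist G x₀ x + 1)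
    (hsum : ∀ s : ℝ, 0 < s →
      Summable (fun Q : ℕ => (qhDist G x₀ (W.c Q) + 1) ^ s * (volume (W.cube Q)).toReal)) :
    ∀ ε ∈ Set.Ioo (0:ℝ) 1, ∀ q : ℝ, 1 ≤ q → ∃ c : ℝ, 0 < c ∧ ∀ A : ℕ,
      ∑' Q : {Q : ℕ // W.cube Q ⊆ S A},
          (ℓC Q.1 : ℝ) ^ (q - 1) * (volume (W.cube Q.1)).toReal
        ≤ c * (volume (S A)).toReal ^ (1 - ε) := by
  intro ε hε q hq
  obtain ⟨hε0, hε1⟩ := hε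
  have hq1 : (0:ℝ) ≤ q - 1 := by linarith
  have h1ε : (0:ℝ) < 1 - ε := by linarith
  set e : ℝ := (q - 1) / ε with he
  have he0 : 0 ≤ e := div_nonneg hq1 hε0.le
  set s' : ℝ := e + 1 with hs'
  have hs'pos : 0 < s' := by positivity
  set C : ℝ := cn + 2 with hC
  have hC1 : 1 ≤ C := by linarith
  have hk : ∀ Q, 0 ≤ qhDist G x₀ (W.c Q) := fun Q => qhDist_nonneg' _ _ _
  have hcenter : ∀ Q, W.c Q ∈ W.cube Q := by
    intro Q i
    obtain ⟨j, k, hsQ, _⟩ := W.dyadic Q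
    have hpos : (0:ℝ) < W.s Q := by rw [hsQ]; positivity
    simp only [sub_self, abs_zero]
    linarith
  have hℓ : ∀ Q, (ℓC Q : ℝ) + 1 ≤ C * (qhDist G x₀ (W.c Q) + 1) := by
    intro Q
    have h1 := hchain Q _ (hcenter Q)
    have h2 := hk Q
    nlinarith
  have hkey : ∀ Q, ((ℓC Q : ℝ) + 1) ^ e ≤ C ^ e * (qhDist G x₀ (W.c Q) + 1) ^ s' := by
    intro Q
    have hb : (0:ℝ) ≤ qhDist G x₀ (W.c Q) + 1 := by linarith [hk Q]
    have h1 : ((ℓC Q : ℝ) + 1) ^ e ≤ (C * (qhDist G x₀ (W.c Q) + 1)) ^ e :=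
      Real.rpow_le_rpow (by positivity) (hℓ Q) he0
    have h2 : (C * (qhDist G x₀ (W.c Q) + 1)) ^ e
        = C ^ e * (qhDist G x₀ (W.c Q) + 1) ^ e := Real.mul_rpow (by linarith) hb
    have h3 : (qhDist G x₀ (W.c Q) + 1) ^ e ≤ (qhDist G x₀ (W.c Q) + 1) ^ s' :=
      Real.rpow_le_rpow_of_exponent_le (by linarith [hk Q]) (by rw [hs']; linarith)
    calc ((ℓC Q : ℝ) + 1) ^ e ≤ C ^ e * (qhDist G x₀ (W.c Q) + 1) ^ e := by rw [← h2]; exact h1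
      _ ≤ C ^ e * (qhDist G x₀ (W.c Q) + 1) ^ s' := by
          have : (0:ℝ) ≤ C ^ e := Real.rpow_nonneg (by linarith) _
          nlinarith
  have hptw : ∀ Q : ℕ, (ℓC Q : ℝ) ^ (q-1) ≤ C ^ e * (qhDist G x₀ (W.c Q) + 1) ^ s' := by
    intro Q
    have h1 : (ℓC Q : ℝ) ^ (q-1) ≤ ((ℓC Q : ℝ) + 1) ^ (q-1) :=
      Real.rpow_le_rpow (Nat.cast_nonneg _) (by linarith) hq1
    have h2 : ((ℓC Q : ℝ) + 1) ^ (q-1) ≤ ((ℓC Q : ℝ) + 1) ^ e := by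
      apply Real.rpow_le_rpow_of_exponent_le
        (by have h := Nat.cast_nonneg (α := ℝ) (ℓC Q); linarith)
      rw [he, le_div_iff₀ hε0]
      nlinarith
    exact h1.trans (h2.trans (hkey Q))
  set M0 : ℝ := ∑' Q : ℕ, (qhDist G x₀ (W.c Q) + 1) ^ s' * (volume (W.cube Q)).toReal with hM0
  have hsum' := hsum s' hs'pos
  have htermnn : ∀ Q : ℕ, 0 ≤ (qhDist G x₀ (W.c Q) + 1) ^ s' * (volume (W.cube Q)).toReal :=
    fun Q => mul_nonneg (Real.rpow_nonneg (by linarith [hk Q]) _) ENNReal.toReal_nonneg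
  have hM0nn : 0 ≤ M0 := tsum_nonneg htermnn
  set M' : ℝ := C ^ e * M0 with hM'def
  have hM' : 0 ≤ M' := mul_nonneg (Real.rpow_nonneg (by linarith) _) hM0nn
  set c1 : ℝ := M' ^ ε + 1 with hc1def
  have hc1 : 0 < c1 := by
    have := Real.rpow_nonneg hM' ε
    rw [hc1def]; linarith
  refine ⟨c1, hc1, ?_⟩
  intro A
  have hcubeG : ∀ Q, W.cube Q ⊆ G := by
    intro Q
    have h := Set.subset_iUnion (fun i => closedCube (W.c i) (W.s i)) Q
    rw [← W.cover] at h
    exact h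
  have hvolG : volume G < ⊤ := hGb.measure_lt_top
  have hvolcube : ∀ Q, volume (W.cube Q) < ⊤ :=
    fun Q => lt_of_le_of_lt (measure_mono (hcubeG Q)) hvolG
  have hvolSA : volume (S A) < ⊤ := lt_of_le_of_lt (measure_mono (hS A)) hvolG
  have hfrontier : ∀ Q, volume (W.cube Q) = volume (interior (W.cube Q)) := by
    intro Q
    refine le_antisymm ?_ (measure_mono interior_subset)
    have hsub : W.cube Q ⊆ interior (W.cube Q) ∪ frontier (W.cube Q) := by
      intro x hx
      by_cases h : x ∈ interior (W.cube Q)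
      · exact Or.inl h
      · exact Or.inr ⟨subset_closure hx, h⟩
    calc volume (W.cube Q) ≤ volume (interior (W.cube Q) ∪ frontier (W.cube Q)) :=
          measure_mono hsub
      _ ≤ volume (interior (W.cube Q)) + volume (frontier (W.cube Q)) := measure_union_le _ _
      _ = volume (interior (W.cube Q)) := by
          rw [show volume (frontier (W.cube Q)) = 0 from
            Convex.addHaar_frontier volume (convex_closedCube' (W.c Q) (W.s Q)), add_zero]
  have hdisj : Pairwise (Function.onFun Disjoint
      fun Q : {Q : ℕ // W.cube Q ⊆ S A} => interior (W.cube Q.1)) := by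
    intro Q R hQR
    have hne : Q.1 ≠ R.1 := fun h => hQR (Subtype.ext h)
    exact Set.disjoint_iff_inter_eq_empty.mpr (W.disjoint_interiors hne)
  have hvol_sum : ∑' Q : {Q : ℕ // W.cube Q ⊆ S A}, volume (W.cube Q.1) ≤ volume (S A) := by
    calc ∑' Q : {Q : ℕ // W.cube Q ⊆ S A}, volume (W.cube Q.1)
        = ∑' Q : {Q : ℕ // W.cube Q ⊆ S A}, volume (interior (W.cube Q.1)) :=
          tsum_congr fun Q => hfrontier Q.1
      _ = volume (⋃ Q : {Q : ℕ // W.cube Q ⊆ S A}, interior (W.cube Q.1)) :=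
          (measure_iUnion hdisj fun Q => isOpen_interior.measurableSet).symm
      _ ≤ volume (S A) := by
          apply measure_mono
          intro x hx
          simp only [Set.mem_iUnion] at hx
          obtain ⟨Q, hQ⟩ := hx
          exact Q.2 (interior_subset hQ)
  set F : {Q : ℕ // W.cube Q ⊆ S A} → ℝ≥0∞ := fun Q =>
    ENNReal.ofReal (((ℓC Q.1 : ℝ) + 1) ^ (q-1)) * (volume (W.cube Q.1)) ^ (ε : ℝ) with hFdef
  set Gg : {Q : ℕ // W.cube Q ⊆ S A} → ℝ≥0∞ := fun Q =>
    (volume (W.cube Q.1)) ^ ((1-ε) : ℝ) with hGgdef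
  have hconj : (1/ε).HolderConjugate (1/(1-ε)) := by
    exact Real.holderConjugate_one_div hε0 h1ε (by ring)
  have hholder := ENNReal.lintegral_mul_le_Lp_mul_Lq (Measure.count) hconj
      (measurable_of_countable F).aemeasurable (measurable_of_countable Gg).aemeasurable
  simp only [lintegral_count, one_div_one_div] at hholder
  have hFG : ∀ Q : {Q : ℕ // W.cube Q ⊆ S A},
      ENNReal.ofReal ((ℓC Q.1 : ℝ) ^ (q-1) * (volume (W.cube Q.1)).toReal) ≤ (F * Gg) Q := by
    intro Q
    have hvol : ENNReal.ofReal ((volume (W.cube Q.1)).toReal) = volume (W.cube Q.1) :=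
      ENNReal.ofReal_toReal (hvolcube Q.1).ne
    calc ENNReal.ofReal ((ℓC Q.1 : ℝ) ^ (q-1) * (volume (W.cube Q.1)).toReal)
        = ENNReal.ofReal ((ℓC Q.1 : ℝ) ^ (q-1)) * volume (W.cube Q.1) := by
          rw [ENNReal.ofReal_mul (Real.rpow_nonneg (Nat.cast_nonneg _) _), hvol]
      _ ≤ ENNReal.ofReal (((ℓC Q.1 : ℝ) + 1) ^ (q-1)) * volume (W.cube Q.1) := by
          have h : (ℓC Q.1 : ℝ) ^ (q-1) ≤ ((ℓC Q.1 : ℝ) + 1) ^ (q-1) :=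
            Real.rpow_le_rpow (Nat.cast_nonneg _) (by linarith) hq1
          exact mul_le_mul_left (ENNReal.ofReal_le_ofReal h) _
      _ = (F * Gg) Q := by
          simp only [hFdef, hGgdef, Pi.mul_apply]
          rw [mul_assoc, ← ENNReal.rpow_add_of_nonneg ε (1-ε) hε0.le h1ε.le,
            show ε + (1-ε) = 1 by ring, ENNReal.rpow_one]
  have hGg1 : ∀ Q : {Q : ℕ // W.cube Q ⊆ S A}, Gg Q ^ (1/(1-ε)) = volume (W.cube Q.1) := by
    intro Q
    simp only [hGgdef]
    rw [← ENNReal.rpow_mul, show (1-ε) * (1/(1-ε)) = 1 by field_simp, ENNReal.rpow_one]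
  have hF1 : ∀ Q : {Q : ℕ // W.cube Q ⊆ S A}, F Q ^ (1/ε)
      ≤ ENNReal.ofReal (C ^ e) * ENNReal.ofReal
        ((qhDist G x₀ (W.c Q.1) + 1) ^ s' * (volume (W.cube Q.1)).toReal) := by
    intro Q
    simp only [hFdef]
    rw [ENNReal.mul_rpow_of_nonneg _ _ (by positivity),
      ENNReal.ofReal_rpow_of_nonneg (Real.rpow_nonneg (by positivity) _) (by positivity),
      ← ENNReal.rpow_mul, show ε * (1/ε) = 1 by field_simp, ENNReal.rpow_one,
      ← Real.rpow_mul (by positivity), show (q-1) * (1/ε) = e by rw [he]; ring]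
    calc ENNReal.ofReal (((ℓC Q.1 : ℝ) + 1) ^ e) * volume (W.cube Q.1)
        ≤ ENNReal.ofReal (C ^ e * (qhDist G x₀ (W.c Q.1) + 1) ^ s') * volume (W.cube Q.1) := by
          gcongr
          exact hkey Q.1
      _ = ENNReal.ofReal (C ^ e) * ENNReal.ofReal
          ((qhDist G x₀ (W.c Q.1) + 1) ^ s' * (volume (W.cube Q.1)).toReal) := by
          rw [ENNReal.ofReal_mul (Real.rpow_nonneg (by linarith) _),
            ENNReal.ofReal_mul (Real.rpow_nonneg (by linarith [hk Q.1]) _),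
            ENNReal.ofReal_toReal (hvolcube Q.1).ne, mul_assoc]
  have hsumF : ∑' Q : {Q : ℕ // W.cube Q ⊆ S A}, F Q ^ (1/ε) ≤ ENNReal.ofReal M' := by
    calc ∑' Q : {Q : ℕ // W.cube Q ⊆ S A}, F Q ^ (1/ε)
        ≤ ∑' Q : {Q : ℕ // W.cube Q ⊆ S A}, ENNReal.ofReal (C ^ e) * ENNReal.ofReal
            ((qhDist G x₀ (W.c Q.1) + 1) ^ s' * (volume (W.cube Q.1)).toReal) :=
          ENNReal.tsum_le_tsum hF1
      _ = ENNReal.ofReal (C ^ e) * ∑' Q : {Q : ℕ // W.cube Q ⊆ S A}, ENNReal.ofReal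
            ((qhDist G x₀ (W.c Q.1) + 1) ^ s' * (volume (W.cube Q.1)).toReal) :=
          ENNReal.tsum_mul_left
      _ ≤ ENNReal.ofReal (C ^ e) * ∑' Q : ℕ, ENNReal.ofReal
            ((qhDist G x₀ (W.c Q) + 1) ^ s' * (volume (W.cube Q)).toReal) := by
          gcongr
          exact ENNReal.tsum_comp_le_tsum_of_injective Subtype.val_injective _
      _ = ENNReal.ofReal (C ^ e) * ENNReal.ofReal M0 := by
          rw [hM0, ENNReal.ofReal_tsum_of_nonneg htermnn hsum']
      _ = ENNReal.ofReal M' := by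
          rw [hM'def, ENNReal.ofReal_mul (Real.rpow_nonneg (by linarith) _)]
  have hENN : ∑' Q : {Q : ℕ // W.cube Q ⊆ S A},
      ENNReal.ofReal ((ℓC Q.1 : ℝ) ^ (q-1) * (volume (W.cube Q.1)).toReal)
      ≤ ENNReal.ofReal c1 * volume (S A) ^ ((1-ε) : ℝ) := by
    calc ∑' Q : {Q : ℕ // W.cube Q ⊆ S A},
        ENNReal.ofReal ((ℓC Q.1 : ℝ) ^ (q-1) * (volume (W.cube Q.1)).toReal)
        ≤ ∑' Q : {Q : ℕ // W.cube Q ⊆ S A}, (F * Gg) Q := ENNReal.tsum_le_tsum hFG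
      _ ≤ (∑' Q : {Q : ℕ // W.cube Q ⊆ S A}, F Q ^ (1/ε)) ^ ε *
          (∑' Q : {Q : ℕ // W.cube Q ⊆ S A}, Gg Q ^ (1/(1-ε))) ^ (1-ε) := hholder
      _ ≤ (ENNReal.ofReal M') ^ ε * (volume (S A)) ^ ((1-ε) : ℝ) := by
          gcongr
          calc ∑' Q : {Q : ℕ // W.cube Q ⊆ S A}, Gg Q ^ (1/(1-ε))
                = ∑' Q : {Q : ℕ // W.cube Q ⊆ S A}, volume (W.cube Q.1) := tsum_congr hGg1
              _ ≤ volume (S A) := hvol_sum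
      _ ≤ ENNReal.ofReal c1 * volume (S A) ^ ((1-ε) : ℝ) := by
          gcongr
          rw [ENNReal.ofReal_rpow_of_nonneg hM' hε0.le]
          apply ENNReal.ofReal_le_ofReal
          rw [hc1def]; linarith
  have hnn : ∀ Q : {Q : ℕ // W.cube Q ⊆ S A},
      0 ≤ (ℓC Q.1 : ℝ) ^ (q-1) * (volume (W.cube Q.1)).toReal :=
    fun Q => mul_nonneg (Real.rpow_nonneg (Nat.cast_nonneg _) _) ENNReal.toReal_nonneg
  have hsummable : Summable (fun Q : {Q : ℕ // W.cube Q ⊆ S A} =>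
      (ℓC Q.1 : ℝ) ^ (q-1) * (volume (W.cube Q.1)).toReal) := by
    have hdom : Summable (fun Q : ℕ =>
        C ^ e * ((qhDist G x₀ (W.c Q) + 1) ^ s' * (volume (W.cube Q)).toReal)) :=
      hsum'.mul_left _
    have hdom' := hdom.subtype {Q : ℕ | W.cube Q ⊆ S A}
    apply Summable.of_nonneg_of_le hnn ?_ hdom'
    intro Q
    have := hptw Q.1
    have hv : (0:ℝ) ≤ (volume (W.cube Q.1)).toReal := ENNReal.toReal_nonneg
    calc (ℓC Q.1 : ℝ) ^ (q-1) * (volume (W.cube Q.1)).toReal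
        ≤ (C ^ e * (qhDist G x₀ (W.c Q.1) + 1) ^ s') * (volume (W.cube Q.1)).toReal := by
          apply mul_le_mul_of_nonneg_right (hptw Q.1) hv
      _ = C ^ e * ((qhDist G x₀ (W.c Q.1) + 1) ^ s' * (volume (W.cube Q.1)).toReal) := by ring
  have hRHSnn : 0 ≤ c1 * (volume (S A)).toReal ^ (1-ε) :=
    mul_nonneg hc1.le (Real.rpow_nonneg ENNReal.toReal_nonneg _)
  rw [← ENNReal.ofReal_le_ofReal_iff hRHSnn, ENNReal.ofReal_tsum_of_nonneg hnn hsummable]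
  calc ∑' Q : {Q : ℕ // W.cube Q ⊆ S A},
      ENNReal.ofReal ((ℓC Q.1 : ℝ) ^ (q-1) * (volume (W.cube Q.1)).toReal)
      ≤ ENNReal.ofReal c1 * volume (S A) ^ ((1-ε) : ℝ) := hENN
    _ = ENNReal.ofReal (c1 * (volume (S A)).toReal ^ (1-ε)) := by
        rw [ENNReal.ofReal_mul hc1.le]
        congr 1
        rw [ENNReal.toReal_rpow, ENNReal.ofReal_toReal
          (ENNReal.rpow_lt_top_of_nonneg h1ε.le hvolSA.ne).ne]
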